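/- (Theorem 1, primal part.) For every θ ∈ ℝⁿ, the primal parametric solution for the enlarged active set A_j = A_i ∪ {j} satisfies the rank-one update identity z_{A_j}(θ) = z_{A_i}(θ) + f_j (c_j + v_jᵀ θ), where f_j = H⁻¹ G_{A_j}ᵀ (d̃_j restricted to A_j) ∈ ℝ^m. -/

import Mathlib

open Matrix

noncomputable section
namespace MpQP

/-- Submatrix of the rows of `G` indexed by the finite index set `A`. -/
def subRows {nc p : ℕ} (G : Matrix (Fin nc) (Fin p) ℝ) (A : Finset (Fin nc)) :
    Matrix A (Fin p) ℝ := Matrix.of fun i k => G i.val k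

/-- Subvector of `b` indexed by `A`. -/
def subVec {nc : ℕ} (b : Fin nc → ℝ) (A : Finset (Fin nc)) : A → ℝ := fun i => b i.val

/-- `G_A` has full row rank, i.e. the rows of `G` indexed by `A` are linearly independent. -/
def FullRowRank {nc m : ℕ} (G : Matrix (Fin nc) (Fin m) ℝ) (A : Finset (Fin nc)) : Prop :=
  LinearIndependent ℝ (fun i : A => G i.val)

/-- The parametric dual solution `λ_A(θ) = −(G_A H⁻¹ G_Aᵀ)⁻¹ (b_A + S_A θ)`. -/
def lamOf {m n nc : ℕ} (H : Matrix (Fin m) (Fin m) ℝ) (G : Matrix (Fin nc) (Fin m) ℝ)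
    (b : Fin nc → ℝ) (S : Matrix (Fin nc) (Fin n) ℝ) (A : Finset (Fin nc))
    (θ : Fin n → ℝ) : A → ℝ :=
  -((subRows G A * H⁻¹ * (subRows G A)ᵀ)⁻¹.mulVec
      (fun i => b i.val + S.mulVec θ i.val))

/-- The parametric primal solution `z_A(θ) = −H⁻¹ G_Aᵀ λ_A(θ)`. -/
def zOf {m n nc : ℕ} (H : Matrix (Fin m) (Fin m) ℝ) (G : Matrix (Fin nc) (Fin m) ℝ)
    (b : Fin nc → ℝ) (S : Matrix (Fin nc) (Fin n) ℝ) (A : Finset (Fin nc))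
    (θ : Fin n → ℝ) : Fin m → ℝ :=
  -((H⁻¹ * (subRows G A)ᵀ).mulVec (lamOf H G b S A θ))

/-- `λ̃_A(θ) ∈ ℝ^{n_c}`: the dual solution extended by zeros outside `A`. -/
def lamExt {m n nc : ℕ} (H : Matrix (Fin m) (Fin m) ℝ) (G : Matrix (Fin nc) (Fin m) ℝ)
    (b : Fin nc → ℝ) (S : Matrix (Fin nc) (Fin n) ℝ) (A : Finset (Fin nc))
    (θ : Fin n → ℝ) : Fin nc → ℝ :=
  fun k => if h : k ∈ A then lamOf H G b S A θ ⟨k, h⟩ else 0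

/-- `W = G_A H⁻¹ G_Aᵀ`. -/
def Wmat {m nc : ℕ} (H : Matrix (Fin m) (Fin m) ℝ) (G : Matrix (Fin nc) (Fin m) ℝ)
    (A : Finset (Fin nc)) : Matrix A A ℝ :=
  subRows G A * H⁻¹ * (subRows G A)ᵀ

/-- `w = G_A H⁻¹ G_jᵀ`. -/
def wvec {m nc : ℕ} (H : Matrix (Fin m) (Fin m) ℝ) (G : Matrix (Fin nc) (Fin m) ℝ)
    (A : Finset (Fin nc)) (j : Fin nc) : A → ℝ :=
  (subRows G A * H⁻¹).mulVec (G j)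

/-- `w₀ = G_j H⁻¹ G_jᵀ`. -/
def w0 {m nc : ℕ} (H : Matrix (Fin m) (Fin m) ℝ) (G : Matrix (Fin nc) (Fin m) ℝ)
    (j : Fin nc) : ℝ :=
  G j ⬝ᵥ H⁻¹.mulVec (G j)

/-- The Schur complement `C = w₀ − wᵀ W⁻¹ w`. -/
def Cval {m nc : ℕ} (H : Matrix (Fin m) (Fin m) ℝ) (G : Matrix (Fin nc) (Fin m) ℝ)
    (A : Finset (Fin nc)) (j : Fin nc) : ℝ :=
  w0 H G j - wvec H G A j ⬝ᵥ (Wmat H G A)⁻¹.mulVec (wvec H G A j)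

/-- `c_j = C⁻¹ (wᵀ W⁻¹ b_A − b_j)`. -/
def cVal {m nc : ℕ} (H : Matrix (Fin m) (Fin m) ℝ) (G : Matrix (Fin nc) (Fin m) ℝ)
    (b : Fin nc → ℝ) (A : Finset (Fin nc)) (j : Fin nc) : ℝ :=
  (Cval H G A j)⁻¹ * (wvec H G A j ⬝ᵥ (Wmat H G A)⁻¹.mulVec (subVec b A) - b j)

/-- `v_j = C⁻¹ (S_Aᵀ W⁻¹ w − S_jᵀ)`. -/
def vVec {m n nc : ℕ} (H : Matrix (Fin m) (Fin m) ℝ) (G : Matrix (Fin nc) (Fin m) ℝ)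
    (S : Matrix (Fin nc) (Fin n) ℝ) (A : Finset (Fin nc)) (j : Fin nc) : Fin n → ℝ :=
  (Cval H G A j)⁻¹ •
    ((subRows S A)ᵀ.mulVec ((Wmat H G A)⁻¹.mulVec (wvec H G A j)) - S j)

/-- `d̃_j ∈ ℝ^{n_c}`: equal to `W⁻¹ w` on `A`, to `−1` at index `j`, and `0` elsewhere. -/
def dExt {m nc : ℕ} (H : Matrix (Fin m) (Fin m) ℝ) (G : Matrix (Fin nc) (Fin m) ℝ)
    (A : Finset (Fin nc)) (j : Fin nc) : Fin nc → ℝ :=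
  fun k =>
    if h : k ∈ A then (Wmat H G A)⁻¹.mulVec (wvec H G A j) ⟨k, h⟩
    else if k = j then -1 else 0

/-- `f_j = H⁻¹ G_{A ∪ {j}}ᵀ (d̃_j restricted to A ∪ {j})`. -/
def fVec {m nc : ℕ} (H : Matrix (Fin m) (Fin m) ℝ) (G : Matrix (Fin nc) (Fin m) ℝ)
    (A : Finset (Fin nc)) (j : Fin nc) : Fin m → ℝ :=
  (H⁻¹ * (subRows G (insert j A))ᵀ).mulVec (fun i => dExt H G A j i.val)

/-! The candidate `z_{A_i}(θ) + α f_j`, `α = c_j + v_jᵀθ`, lies in the range of `H⁻¹ G_{A_j}ᵀ`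
(with coefficients `α d̃_j − λ̃_{A_i}(θ)`), and as `W_{A_j}` is invertible, `z_{A_j}(θ)` is the
only vector in that range with `G_{A_j} z = b_{A_j} + S_{A_j} θ`. The rows in `A_i` hold because
`G_{A_i} f_j = W W⁻¹ w − w = 0`; row `j` holds because `G_j f_j = −C` and `C α` is exactly the
defect of `z_{A_i}(θ)` in that row. Finally `C = uᵀ H⁻¹ u > 0` for `u = G_{A_j}ᵀ d̃_j`, which is
nonzero by the full row rank of `G_{A_j}` since `d̃_j(j) = −1`. -/

section

variable {m n nc : ℕ}

lemma dotProduct_mulVec_comm_of_isSymm {ι : Type*} [Fintype ι] {M : Matrix ι ι ℝ}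
    (hM : M.IsSymm) (x y : ι → ℝ) : x ⬝ᵥ M *ᵥ y = y ⬝ᵥ M *ᵥ x := by
  rw [dotProduct_mulVec, ← mulVec_transpose, hM.eq, dotProduct_comm]

lemma isSymm_inv_of_posDef {ι : Type*} [Fintype ι] [DecidableEq ι] {M : Matrix ι ι ℝ}
    (hM : M.PosDef) : M⁻¹.IsSymm := by
  simpa [Matrix.IsSymm, Matrix.IsHermitian] using hM.inv.isHermitian

@[simp]
lemma subRows_apply {p : ℕ} (M : Matrix (Fin nc) (Fin p) ℝ) (A : Finset (Fin nc)) (i : A) :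
    subRows M A i = M i :=
  rfl

lemma subRows_mulVec_apply {p : ℕ} (M : Matrix (Fin nc) (Fin p) ℝ) (A : Finset (Fin nc))
    (x : Fin p → ℝ) (i : A) : (subRows M A *ᵥ x) i = M i ⬝ᵥ x :=
  rfl

lemma subRows_transpose_mulVec_insert (G : Matrix (Fin nc) (Fin m) ℝ) {A : Finset (Fin nc)}
    {j : Fin nc} (hj : j ∉ A) (x : Fin nc → ℝ) :
    (subRows G (insert j A))ᵀ *ᵥ (fun i => x i) =
      x j • G j + (subRows G A)ᵀ *ᵥ (fun i => x i) := by
  simp only [mulVec_transpose, vecMul_eq_sum, subRows_apply]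
  rw [Finset.sum_coe_sort (insert j A) (fun i => x i • G i), Finset.sum_insert hj,
    ← Finset.sum_coe_sort A]

lemma Wmat_posDef {H : Matrix (Fin m) (Fin m) ℝ} (hH : H.PosDef) {G : Matrix (Fin nc) (Fin m) ℝ}
    {A : Finset (Fin nc)} (hA : FullRowRank G A) : (Wmat H G A).PosDef := by
  have := hH.inv.mul_mul_conjTranspose_same (B := subRows G A) (vecMul_injective_iff.mpr hA)
  rwa [conjTranspose_eq_transpose_of_trivial] at this

variable (H : Matrix (Fin m) (Fin m) ℝ) (G : Matrix (Fin nc) (Fin m) ℝ) (b : Fin nc → ℝ)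
  (S : Matrix (Fin nc) (Fin n) ℝ) {A : Finset (Fin nc)} {j : Fin nc}

lemma Wmat_mulVec (y : A → ℝ) :
    Wmat H G A *ᵥ y = subRows G A *ᵥ (H⁻¹ *ᵥ ((subRows G A)ᵀ *ᵥ y)) := by
  simp only [Wmat, mulVec_mulVec, Matrix.mul_assoc]

lemma zOf_eq (θ : Fin n → ℝ) :
    zOf H G b S A θ = -(H⁻¹ *ᵥ ((subRows G A)ᵀ *ᵥ lamOf H G b S A θ)) := by
  rw [zOf, mulVec_mulVec]

lemma subRows_mulVec_zOf (hW : IsUnit (Wmat H G A).det) (θ : Fin n → ℝ) :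
    subRows G A *ᵥ zOf H G b S A θ = fun i : A => b i + (S *ᵥ θ) i := by
  rw [zOf_eq, mulVec_neg, ← Wmat_mulVec, lamOf, ← Wmat, mulVec_neg, neg_neg, mulVec_mulVec,
    mul_nonsing_inv _ hW, one_mulVec]

lemma eq_zOf_of_subRows_mulVec (hW : IsUnit (Wmat H G A).det) {θ : Fin n → ℝ} {z : Fin m → ℝ}
    (y : A → ℝ) (hz : z = H⁻¹ *ᵥ ((subRows G A)ᵀ *ᵥ y))
    (hGz : subRows G A *ᵥ z = fun i : A => b i + (S *ᵥ θ) i) :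
    z = zOf H G b S A θ := by
  have hy : y = -lamOf H G b S A θ := by
    rw [lamOf, ← Wmat, neg_neg, ← hGz, hz, ← Wmat_mulVec, mulVec_mulVec,
      nonsing_inv_mul _ hW, one_mulVec]
  rw [zOf_eq, hz, hy, mulVec_neg, mulVec_neg]

lemma dotProduct_inv_mulVec_subRows_transpose_mulVec (hH : H.PosDef) (y : A → ℝ) :
    G j ⬝ᵥ H⁻¹ *ᵥ ((subRows G A)ᵀ *ᵥ y) = wvec H G A j ⬝ᵥ y := by
  rw [dotProduct_mulVec_comm_of_isSymm (isSymm_inv_of_posDef hH), mulVec_transpose,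
    ← dotProduct_mulVec, dotProduct_comm, wvec, ← mulVec_mulVec]

lemma subRows_insert_transpose_mulVec_lamExt (hj : j ∉ A) (θ : Fin n → ℝ) :
    (subRows G (insert j A))ᵀ *ᵥ (fun i => lamExt H G b S A θ i) =
      (subRows G A)ᵀ *ᵥ lamOf H G b S A θ := by
  rw [subRows_transpose_mulVec_insert G hj]
  simp [lamExt, hj]

lemma subRows_insert_transpose_mulVec_dExt (hj : j ∉ A) :
    (subRows G (insert j A))ᵀ *ᵥ (fun i => dExt H G A j i) =
      (subRows G A)ᵀ *ᵥ ((Wmat H G A)⁻¹ *ᵥ wvec H G A j) - G j := by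
  rw [subRows_transpose_mulVec_insert G hj]
  simp [dExt, hj, sub_eq_neg_add]

lemma fVec_eq :
    fVec H G A j = H⁻¹ *ᵥ ((subRows G (insert j A))ᵀ *ᵥ (fun i => dExt H G A j i)) := by
  rw [fVec, mulVec_mulVec]

lemma subRows_mulVec_fVec (hj : j ∉ A) (hW : IsUnit (Wmat H G A).det) :
    subRows G A *ᵥ fVec H G A j = 0 := by
  rw [fVec_eq, subRows_insert_transpose_mulVec_dExt H G hj, mulVec_sub, mulVec_sub,
    ← Wmat_mulVec, mulVec_mulVec, mul_nonsing_inv _ hW, one_mulVec, wvec, mulVec_mulVec,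
    sub_self]

lemma dotProduct_fVec (hH : H.PosDef) (hj : j ∉ A) :
    G j ⬝ᵥ fVec H G A j = -Cval H G A j := by
  rw [fVec_eq, subRows_insert_transpose_mulVec_dExt H G hj, mulVec_sub, dotProduct_sub,
    dotProduct_inv_mulVec_subRows_transpose_mulVec H G hH, Cval, w0]
  ring

lemma Cval_pos (hH : H.PosDef) (hj : j ∉ A) (hW : IsUnit (Wmat H G A).det)
    (hAj : FullRowRank G (insert j A)) : 0 < Cval H G A j := by
  have hu : (subRows G (insert j A))ᵀ *ᵥ (fun i => dExt H G A j i) ≠ 0 := by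
    intro hu
    have hinj : Function.Injective fun v => v ᵥ* subRows G (insert j A) :=
      vecMul_injective_iff.mpr hAj
    have hd := hinj (a₁ := fun i => dExt H G A j i) (a₂ := 0)
      (by simpa only [← mulVec_transpose, mulVec_zero] using hu)
    simpa [dExt, hj] using congrFun hd ⟨j, Finset.mem_insert_self j A⟩
  have hpos := hH.inv.dotProduct_mulVec_pos hu
  rwa [star_trivial, ← fVec_eq, subRows_insert_transpose_mulVec_dExt H G hj, sub_dotProduct,
    mulVec_transpose, ← dotProduct_mulVec, subRows_mulVec_fVec H G hj hW, dotProduct_zero,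
    dotProduct_fVec H G hH hj, zero_sub, neg_neg] at hpos

lemma dotProduct_zOf (hH : H.PosDef) (hA : FullRowRank G A) (θ : Fin n → ℝ) :
    G j ⬝ᵥ zOf H G b S A θ =
      (Wmat H G A)⁻¹ *ᵥ wvec H G A j ⬝ᵥ fun i : A => b i + (S *ᵥ θ) i := by
  rw [zOf_eq, dotProduct_neg, dotProduct_inv_mulVec_subRows_transpose_mulVec H G hH, lamOf,
    ← Wmat, dotProduct_neg, neg_neg, dotProduct_mulVec_comm_of_isSymm
      (isSymm_inv_of_posDef (Wmat_posDef hH hA)), dotProduct_comm]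

lemma Cval_mul_cVal_add (hH : H.PosDef) (hA : FullRowRank G A) (hC : Cval H G A j ≠ 0)
    (θ : Fin n → ℝ) :
    Cval H G A j * (cVal H G b A j + vVec H G S A j ⬝ᵥ θ) =
      ((Wmat H G A)⁻¹ *ᵥ wvec H G A j ⬝ᵥ fun i : A => b i + (S *ᵥ θ) i) -
        (b j + (S *ᵥ θ) j) := by
  have hq : (fun i : A => b i + (S *ᵥ θ) i) = subVec b A + subRows S A *ᵥ θ := rfl
  rw [hq, dotProduct_add, cVal, vVec, smul_dotProduct, sub_dotProduct, mulVec_transpose,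
    ← dotProduct_mulVec, dotProduct_mulVec_comm_of_isSymm
      (isSymm_inv_of_posDef (Wmat_posDef hH hA)) (wvec H G A j), smul_eq_mul]
  field_simp
  simp only [mulVec, dotProduct_comm (S j), dotProduct_comm (subVec b A)]
  ring

end

/-- Theorem 1, primal part: the primal parametric solution for the enlarged
active set `A_j = A_i ∪ {j}` is a rank-one update of the one for `A_i`:
`z_{A_j}(θ) = z_{A_i}(θ) + (c_j + v_jᵀθ) f_j`. -/
theorem primal_rankOne_update_add
    {m n nc : ℕ} (H : Matrix (Fin m) (Fin m) ℝ) (hH : H.PosDef)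
    (G : Matrix (Fin nc) (Fin m) ℝ) (b : Fin nc → ℝ) (S : Matrix (Fin nc) (Fin n) ℝ)
    (Ai : Finset (Fin nc)) (j : Fin nc) (hj : j ∉ Ai)
    (hAi : FullRowRank G Ai) (hAj : FullRowRank G (insert j Ai)) :
    ∀ θ : Fin n → ℝ,
      zOf H G b S (insert j Ai) θ =
        zOf H G b S Ai θ +
          (cVal H G b Ai j + vVec H G S Ai j ⬝ᵥ θ) • fVec H G Ai j := by
  intro θ
  have hW : IsUnit (Wmat H G Ai).det := (Wmat_posDef hH hAi).det_pos.ne'.isUnit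
  have hWj : IsUnit (Wmat H G (insert j Ai)).det := (Wmat_posDef hH hAj).det_pos.ne'.isUnit
  have hC : Cval H G Ai j ≠ 0 := (Cval_pos H G hH hj hW hAj).ne'
  set α := cVal H G b Ai j + vVec H G S Ai j ⬝ᵥ θ
  symm
  refine eq_zOf_of_subRows_mulVec H G b S hWj
    (α • (fun i : ↥(insert j Ai) => dExt H G Ai j i) -
      fun i : ↥(insert j Ai) => lamExt H G b S Ai θ i) ?_ ?_
  · rw [mulVec_sub, mulVec_smul, mulVec_sub, mulVec_smul, ← fVec_eq,
      subRows_insert_transpose_mulVec_lamExt H G b S hj, zOf_eq, sub_eq_neg_add]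
  · funext ⟨i, hi⟩
    rw [subRows_mulVec_apply, dotProduct_add, dotProduct_smul, smul_eq_mul]
    rcases Finset.mem_insert.mp hi with rfl | hiA
    · rw [dotProduct_zOf H G b S hH hAi, dotProduct_fVec H G hH hj]
      linear_combination -Cval_mul_cVal_add H G b S hH hAi hC θ
    · have hz := congrFun (subRows_mulVec_zOf H G b S hW θ) ⟨i, hiA⟩
      have hf := congrFun (subRows_mulVec_fVec H G hj hW) ⟨i, hiA⟩
      rw [subRows_mulVec_apply] at hz hf
      rw [hz, hf, Pi.zero_apply, mul_zero, add_zero]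

end MpQP
end
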